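/- (Monodromic Deodhar defect formula.) Let (W,S) be a Coxeter system, 𝔬 a set of monodromy parameters, L ∈ 𝔬, and w̲ a word with letters in S. Then for every x ∈ W, the Laurent polynomial p_{w̲}^{x,L} ∈ ℤ[v,v⁻¹] equals the sum, over all L-monodromic subexpressions e of w̲ whose evaluation w̲^e equals x, of v^{d(w̲,e)}. -/

import Mathlib

/-!
Statement 17 (monodromic Deodhar defect formula): for every `x ∈ W`,
`p_{w̲}^{x,L} = ∑ v^{d(w̲,e)}`, the sum over all `L`-monodromic subexpressions `e` of `w̲`
with evaluation `x`.
-/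

attribute [local instance] Classical.propDecidable

noncomputable section

namespace PaperStmt

variable {B W O : Type*} [Group W] {M : CoxeterMatrix B}


/-- Auxiliary recursion for the coefficients `p_{w̲}^{x,L}`: the word is given with its
letters listed from the right (so that the recursion of the paper, which appends a letter on
the right, becomes structural). -/
def pAux (cs : CoxeterSystem M W) (act : O → W → O) (L : O) :
    List B → W → LaurentPolynomial ℤ
  | [], x => if x = 1 then 1 else 0
  | i :: rev, x =>
      if act (act L (cs.wordProd rev.reverse)) (cs.simple i)
          = act L (cs.wordProd rev.reverse) then
        (if cs.length x < cs.length (x * cs.simple i) then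
          pAux cs act L rev (x * cs.simple i) + LaurentPolynomial.T 1 * pAux cs act L rev x
        else
          pAux cs act L rev (x * cs.simple i) +
            LaurentPolynomial.T (-1) * pAux cs act L rev x)
      else
        pAux cs act L rev (x * cs.simple i)

/-- The Laurent polynomial `p_{w̲}^{x,L} ∈ ℤ[v,v⁻¹]`: the coefficient of the standard basis
element `H_x` in the product of Kazhdan–Lusztig generators attached to the word `w̲`. -/
def pfun (cs : CoxeterSystem M W) (act : O → W → O) (L : O) (ω : List B) (x : W) :
    LaurentPolynomial ℤ :=
  pAux cs act L ω.reverse x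

/-- The evaluation `w̲^e` of a subexpression: the word is recorded as a list of pairs
(letter, `e_i`). -/
def subEval (cs : CoxeterSystem M W) : List (B × Bool) → W
  | [] => 1
  | p :: rest => (if p.2 then cs.simple p.1 else 1) * subEval cs rest

/-- The defect `d(w̲, e)`: the number of `U0` positions minus the number of `D0` positions,
computed along the Bruhat stroll (whose current value is the first argument). -/
def subDefect (cs : CoxeterSystem M W) : W → List (B × Bool) → ℤ
  | _, [] => 0
  | w, p :: rest =>
      (if p.2 then 0
        else if cs.length w < cs.length (w * cs.simple p.1) then 1 else -1) +
        subDefect cs (if p.2 then w * cs.simple p.1 else w) rest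

/-- A subexpression is `L`-monodromic if `e_i = 1` at every position `i ∉ K(w̲, L)`. -/
def IsMonoSub (cs : CoxeterSystem M W) (act : O → W → O) : O → List (B × Bool) → Prop
  | _, [] => True
  | L, p :: rest =>
      (act L (cs.simple p.1) = L ∨ p.2 = true) ∧
        IsMonoSub cs act (act L (cs.simple p.1)) rest


section AuxLemmas

variable (cs : CoxeterSystem M W)

lemma subEval_append (l m : List (B × Bool)) :
    subEval cs (l ++ m) = subEval cs l * subEval cs m := by
  induction l with
  | nil => simp [subEval]
  | cons p t ih => simp [subEval, ih, mul_assoc]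

lemma subDefect_append (w : W) (l m : List (B × Bool)) :
    subDefect cs w (l ++ m) = subDefect cs w l + subDefect cs (w * subEval cs l) m := by
  induction l generalizing w with
  | nil => simp [subDefect, subEval]
  | cons p t ih =>
    obtain ⟨a, b⟩ := p
    cases b <;> simp [subDefect, subEval, ih, add_assoc, mul_assoc]

lemma isMonoSub_append (act : O → W → O)
    (hact_one : ∀ L : O, act L 1 = L)
    (hact_mul : ∀ (L : O) (u v : W), act L (u * v) = act (act L u) v)
    (L : O) (l m : List (B × Bool)) :
    IsMonoSub cs act L (l ++ m) ↔
      IsMonoSub cs act L l ∧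
        IsMonoSub cs act (act L (cs.wordProd (l.map Prod.fst))) m := by
  induction l generalizing L with
  | nil => simp [IsMonoSub, hact_one]
  | cons p t ih => simp [IsMonoSub, ih, cs.wordProd_cons, hact_mul, and_assoc]

end AuxLemmas

lemma sum_ofFn_congr {M : Type*} [AddCommMonoid M] {m n : ℕ} (h : m = n)
    (F : List Bool → M) :
    ∑ e : Fin m → Bool, F (List.ofFn e) = ∑ e : Fin n → Bool, F (List.ofFn e) := by
  subst h; rfl

lemma sum_ofFn_snoc {M : Type*} [AddCommMonoid M] (n : ℕ) (F : List Bool → M) :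
    ∑ e : Fin (n + 1) → Bool, F (List.ofFn e) =
      ∑ e : Fin n → Bool, ∑ b : Bool, F (List.ofFn e ++ [b]) := by
  have h1 : ∑ e : Fin (n + 1) → Bool, F (List.ofFn e) =
      ∑ p : (Fin n → Bool) × Bool, F (List.ofFn p.1 ++ [p.2]) := by
    refine (Fintype.sum_bijective
        (fun p : (Fin n → Bool) × Bool => (Fin.snoc p.1 p.2 : Fin (n + 1) → Bool))
        ⟨?_, ?_⟩ _ _ ?_).symm
    · intro p q h
      refine Prod.ext (funext fun j => ?_) ?_
      · simpa using congrFun h (Fin.castSucc j)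
      · simpa using congrFun h (Fin.last n)
    · intro e
      exact ⟨(Fin.init e, e (Fin.last n)), Fin.snoc_init_self e⟩
    · intro p
      congr 1
      rw [List.ofFn_succ']
      simp [List.concat_eq_append]
  rw [h1, Fintype.sum_prod_type]

theorem statement_17 (cs : CoxeterSystem M W) (act : O → W → O)
    (hact_one : ∀ L : O, act L 1 = L)
    (hact_mul : ∀ (L : O) (u v : W), act L (u * v) = act (act L u) v)
    (L : O) (ω : List B) (x : W) :
    pfun cs act L ω x =
      ∑ e : Fin ω.length → Bool,
        if IsMonoSub cs act L (ω.zip (List.ofFn e)) ∧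
            subEval cs (ω.zip (List.ofFn e)) = x then
          LaurentPolynomial.T (subDefect cs 1 (ω.zip (List.ofFn e)))
        else 0 := by
  induction ω using List.reverseRecOn generalizing x with
  | nil =>
    simp [pfun, pAux, IsMonoSub, subEval, subDefect, eq_comm]
  | append_singleton ω i ih =>
    have hL : pfun cs act L (ω ++ [i]) x =
        (if act (act L (cs.wordProd ω)) (cs.simple i) = act L (cs.wordProd ω) then
          (if cs.length x < cs.length (x * cs.simple i) then
            pfun cs act L ω (x * cs.simple i) +
              LaurentPolynomial.T 1 * pfun cs act L ω x
          else
            pfun cs act L ω (x * cs.simple i) +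
              LaurentPolynomial.T (-1) * pfun cs act L ω x)
        else pfun cs act L ω (x * cs.simple i)) := by
      simp [pfun, pAux, List.reverse_append]
    have hlen : (ω ++ [i]).length = ω.length + 1 := by simp
    have key := sum_ofFn_congr hlen
      (fun lb => if IsMonoSub cs act L ((ω ++ [i]).zip lb) ∧
          subEval cs ((ω ++ [i]).zip lb) = x then
        (LaurentPolynomial.T (subDefect cs 1 ((ω ++ [i]).zip lb)) : LaurentPolynomial ℤ)
      else 0)
    have key2 := sum_ofFn_snoc ω.length
      (fun lb => if IsMonoSub cs act L ((ω ++ [i]).zip lb) ∧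
          subEval cs ((ω ++ [i]).zip lb) = x then
        (LaurentPolynomial.T (subDefect cs 1 ((ω ++ [i]).zip lb)) : LaurentPolynomial ℤ)
      else 0)
    rw [hL, key, key2]
    have hzip : ∀ (e : Fin ω.length → Bool) (b : Bool),
        (ω ++ [i]).zip (List.ofFn e ++ [b]) = ω.zip (List.ofFn e) ++ [(i, b)] := by
      intro e b
      rw [List.zip_append (by simp)]
      rfl
    have hmap : ∀ e : Fin ω.length → Bool,
        (ω.zip (List.ofFn e)).map Prod.fst = ω :=
      fun e => List.map_fst_zip (by simp)
    have inner : ∀ e : Fin ω.length → Bool,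
        (∑ b : Bool,
          if IsMonoSub cs act L ((ω ++ [i]).zip (List.ofFn e ++ [b])) ∧
              subEval cs ((ω ++ [i]).zip (List.ofFn e ++ [b])) = x then
            (LaurentPolynomial.T (subDefect cs 1 ((ω ++ [i]).zip (List.ofFn e ++ [b])))
              : LaurentPolynomial ℤ)
          else 0)
        = (if IsMonoSub cs act L (ω.zip (List.ofFn e)) ∧
              subEval cs (ω.zip (List.ofFn e)) = x * cs.simple i then
            (LaurentPolynomial.T (subDefect cs 1 (ω.zip (List.ofFn e))) : LaurentPolynomial ℤ)
            else 0)
          + (if act (act L (cs.wordProd ω)) (cs.simple i) = act L (cs.wordProd ω) then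
              LaurentPolynomial.T
                  (if cs.length x < cs.length (x * cs.simple i) then 1 else -1) *
                (if IsMonoSub cs act L (ω.zip (List.ofFn e)) ∧
                    subEval cs (ω.zip (List.ofFn e)) = x then
                  (LaurentPolynomial.T (subDefect cs 1 (ω.zip (List.ofFn e))) : LaurentPolynomial ℤ)
            else 0)
            else 0) := by
      intro e
      rw [Fintype.sum_bool, hzip e true, hzip e false]
      have htrue :
          (if IsMonoSub cs act L (ω.zip (List.ofFn e) ++ [(i, true)]) ∧
              subEval cs (ω.zip (List.ofFn e) ++ [(i, true)]) = x then
            (LaurentPolynomial.T (subDefect cs 1 (ω.zip (List.ofFn e) ++ [(i, true)]))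
              : LaurentPolynomial ℤ)
          else 0)
          = (if IsMonoSub cs act L (ω.zip (List.ofFn e)) ∧
              subEval cs (ω.zip (List.ofFn e)) = x * cs.simple i then
            (LaurentPolynomial.T (subDefect cs 1 (ω.zip (List.ofFn e))) : LaurentPolynomial ℤ)
            else 0) := by
        rw [isMonoSub_append cs act hact_one hact_mul, hmap e, subEval_append,
          subDefect_append]
        have hx : subEval cs (ω.zip (List.ofFn e)) * cs.simple i = x ↔
            subEval cs (ω.zip (List.ofFn e)) = x * cs.simple i := by
          constructor
          · intro h; rw [← h, mul_assoc, cs.simple_mul_simple_self, mul_one]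
          · intro h; rw [h, mul_assoc, cs.simple_mul_simple_self, mul_one]
        simp only [IsMonoSub, subEval, subDefect, mul_one, add_zero, and_true,
          or_true, if_true, one_mul]
        rw [hx]
      have hfalse :
          (if IsMonoSub cs act L (ω.zip (List.ofFn e) ++ [(i, false)]) ∧
              subEval cs (ω.zip (List.ofFn e) ++ [(i, false)]) = x then
            (LaurentPolynomial.T (subDefect cs 1 (ω.zip (List.ofFn e) ++ [(i, false)]))
              : LaurentPolynomial ℤ)
          else 0)
          = (if act (act L (cs.wordProd ω)) (cs.simple i) = act L (cs.wordProd ω) then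
              LaurentPolynomial.T
                  (if cs.length x < cs.length (x * cs.simple i) then 1 else -1) *
                (if IsMonoSub cs act L (ω.zip (List.ofFn e)) ∧
                    subEval cs (ω.zip (List.ofFn e)) = x then
                  (LaurentPolynomial.T (subDefect cs 1 (ω.zip (List.ofFn e))) : LaurentPolynomial ℤ)
            else 0)
            else 0) := by
        rw [isMonoSub_append cs act hact_one hact_mul, hmap e, subEval_append,
          subDefect_append]
        by_cases hc : act (act L (cs.wordProd ω)) (cs.simple i) = act L (cs.wordProd ω)
        · rw [if_pos hc]
          simp only [IsMonoSub, subEval, subDefect, mul_one, add_zero, and_true,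
            one_mul, hc, true_or, true_and, Bool.false_eq_true, if_false,
            or_false]
          by_cases h : IsMonoSub cs act L (ω.zip (List.ofFn e)) ∧
              subEval cs (ω.zip (List.ofFn e)) = x
          · rw [if_pos h, if_pos h, h.2, LaurentPolynomial.T_add]
            exact mul_comm _ _
          · rw [if_neg h, if_neg h, mul_zero]
        · rw [if_neg hc]
          simp [IsMonoSub, hc]
      rw [htrue, hfalse]
    rw [Finset.sum_congr rfl (fun e _ => inner e), Finset.sum_add_distrib,
      ← ih (x * cs.simple i)]
    by_cases hc : act (act L (cs.wordProd ω)) (cs.simple i) = act L (cs.wordProd ω)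
    · simp only [if_pos hc, ← Finset.mul_sum, ← ih x]
      by_cases hlt : cs.length x < cs.length (x * cs.simple i) <;> simp [hlt]
    · simp [hc]

end PaperStmt
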